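/- For all positive integers n and nonnegative integers r, the sum ∑_{k=0}^{n-1} (2k+1)^{2r+1}·D_k is congruent to n modulo 2n, where D_k is the k-th central Delannoy number. -/

import Mathlib

/-!
Write `D_k = ∑_j C(k+j, j) C(k, j)` and `(2k+1)^(2r+1) = (2k+1) (1 + 4k(k+1))^r`, so the sum is
`∑_m C(r, m) 4^m M_m(n)` with `M_m(n) = ∑_{k<n} (2k+1) (k(k+1))^m D_k`. For each `j`,
`∑_{k<n} (2k+1) C(k+j, j) C(k, j) = n C(n+j, j) C(n, j+1)`, and multiplying the summand by
`k(k+1)` turns it into `j(j+1)` times itself plus `(j+1)^2` times the summand for `j+1`;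
hence `n ∣ M_m(n)` for every `m`, and all terms with `m ≥ 1` vanish modulo `2n`. It remains to
see that `M_0(n) / n = ∑_{j<n} C(2j+1, j) C(n+j, 2j+1)` is odd: by Lucas' theorem its only odd
term is the one with `j = 2^(v₂ n) - 1`.
-/

def delannoy (n : ℕ) : ℕ :=
  ∑ k ∈ Finset.range (n + 1), Nat.choose (n + k) (2 * k) * Nat.choose (2 * k) k

open Finset

def delannoyTerm (n j : ℕ) : ℕ := (n + j).choose j * n.choose j

lemma choose_mul_choose_eq_delannoyTerm (n j : ℕ) :
    (n + j).choose (2 * j) * (2 * j).choose j = delannoyTerm n j := by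
  rw [Nat.choose_mul (by omega), delannoyTerm, Nat.add_sub_cancel,
    show 2 * j - j = j by omega]

lemma delannoyTerm_eq_zero_of_lt {n j : ℕ} (h : n < j) : delannoyTerm n j = 0 := by
  rw [delannoyTerm, Nat.choose_eq_zero_of_lt h, mul_zero]

lemma delannoy_eq_sum_delannoyTerm {n N : ℕ} (h : n < N) :
    delannoy n = ∑ j ∈ range N, delannoyTerm n j := by
  simp only [delannoy, choose_mul_choose_eq_delannoyTerm]
  exact sum_subset (range_subset_range.mpr h) fun j _ hj =>
    delannoyTerm_eq_zero_of_lt (by simpa using hj)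

lemma succ_sq_mul_delannoyTerm_succ (n j : ℕ) :
    (j + 1) ^ 2 * delannoyTerm n (j + 1) = (n + j + 1) * (n - j) * delannoyTerm n j := by
  calc (j + 1) ^ 2 * delannoyTerm n (j + 1)
      = ((n + j + 1).choose (j + 1) * (j + 1)) * (n.choose (j + 1) * (j + 1)) := by
        rw [delannoyTerm, ← add_assoc]; ring
    _ = ((n + j + 1) * (n + j).choose j) * (n.choose j * (n - j)) := by
        rw [← Nat.add_one_mul_choose_eq, Nat.choose_succ_right_eq]
    _ = (n + j + 1) * (n - j) * delannoyTerm n j := by rw [delannoyTerm]; ring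

lemma mul_succ_mul_delannoyTerm (n j : ℕ) :
    n * (n + 1) * delannoyTerm n j =
      j * (j + 1) * delannoyTerm n j + (j + 1) ^ 2 * delannoyTerm n (j + 1) := by
  rw [succ_sq_mul_delannoyTerm_succ]
  rcases le_or_gt j n with h | h
  · obtain ⟨d, rfl⟩ := exists_add_of_le h
    rw [Nat.add_sub_cancel_left]
    ring
  · simp [delannoyTerm_eq_zero_of_lt h]

lemma sum_odd_mul_delannoyTerm (N j : ℕ) :
    ∑ k ∈ range N, (2 * k + 1) * delannoyTerm k j =
      N * ((N + j).choose j * N.choose (j + 1)) := by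
  induction N with
  | zero => simp
  | succ N ih =>
    rw [sum_range_succ, ih, delannoyTerm, Nat.choose_succ_succ', add_right_comm]
    rcases lt_or_ge N j with h | h
    · simp [Nat.choose_eq_zero_of_lt h, Nat.choose_eq_zero_of_lt (Nat.lt_succ_of_lt h)]
    · obtain ⟨d, rfl⟩ := exists_add_of_le h
      have hA := Nat.choose_mul_succ_eq (j + d + j) j
      have hC := Nat.choose_succ_right_eq (j + d) j
      rw [Nat.add_sub_cancel_left] at hC
      rw [show j + d + j + 1 - j = j + d + 1 by omega] at hA
      linear_combination ((j + d).choose j + (j + d).choose (j + 1)) * hA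
        - (j + d + j).choose j * hC

lemma dvd_sum_odd_mul_pow_mul_delannoyTerm (m N j : ℕ) :
    N ∣ ∑ k ∈ range N, (2 * k + 1) * (k * (k + 1)) ^ m * delannoyTerm k j := by
  induction m generalizing j with
  | zero => simp [sum_odd_mul_delannoyTerm]
  | succ m ih =>
    have hsplit : ∑ k ∈ range N, (2 * k + 1) * (k * (k + 1)) ^ (m + 1) * delannoyTerm k j =
        j * (j + 1) * ∑ k ∈ range N, (2 * k + 1) * (k * (k + 1)) ^ m * delannoyTerm k j +
          (j + 1) ^ 2 *
            ∑ k ∈ range N, (2 * k + 1) * (k * (k + 1)) ^ m * delannoyTerm k (j + 1) := by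
      simp only [mul_sum, ← sum_add_distrib]
      refine sum_congr rfl fun k _ => ?_
      linear_combination (2 * k + 1) * (k * (k + 1)) ^ m * mul_succ_mul_delannoyTerm k j
    rw [hsplit]
    exact dvd_add ((ih j).mul_left _) ((ih (j + 1)).mul_left _)

def delannoyMoment (m N : ℕ) : ℕ :=
  ∑ k ∈ range N, (2 * k + 1) * (k * (k + 1)) ^ m * delannoy k

lemma delannoyMoment_eq_sum_sum (m N : ℕ) :
    delannoyMoment m N =
      ∑ j ∈ range N, ∑ k ∈ range N, (2 * k + 1) * (k * (k + 1)) ^ m * delannoyTerm k j := by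
  rw [delannoyMoment, sum_comm]
  refine sum_congr rfl fun k hk => ?_
  rw [delannoy_eq_sum_delannoyTerm (mem_range.mp hk), mul_sum]

lemma dvd_delannoyMoment (m N : ℕ) : N ∣ delannoyMoment m N := by
  rw [delannoyMoment_eq_sum_sum]
  exact dvd_sum fun j _ => dvd_sum_odd_mul_pow_mul_delannoyTerm m N j

lemma delannoyMoment_zero (N : ℕ) :
    delannoyMoment 0 N = N * ∑ j ∈ range N, (N + j).choose j * N.choose (j + 1) := by
  simp [delannoyMoment_eq_sum_sum, sum_odd_mul_delannoyTerm, mul_sum]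

lemma odd_pow_eq_sum (k r : ℕ) :
    (2 * k + 1) ^ (2 * r + 1) =
      ∑ m ∈ range (r + 1), r.choose m * 4 ^ m * ((2 * k + 1) * (k * (k + 1)) ^ m) := by
  rw [pow_succ, pow_mul, show (2 * k + 1) ^ 2 = 4 * (k * (k + 1)) + 1 by ring, add_pow, sum_mul]
  refine sum_congr rfl fun m _ => ?_
  rw [mul_pow, Nat.cast_id]
  ring

lemma sum_odd_pow_mul_delannoy (N r : ℕ) :
    ∑ k ∈ range N, (2 * k + 1) ^ (2 * r + 1) * delannoy k =
      ∑ m ∈ range (r + 1), r.choose m * 4 ^ m * delannoyMoment m N := by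
  simp only [odd_pow_eq_sum, delannoyMoment, sum_mul, mul_sum]
  rw [sum_comm]
  refine sum_congr rfl fun m _ => sum_congr rfl fun k _ => ?_
  ring

lemma odd_choose_iff (n k : ℕ) :
    Odd (n.choose k) ↔ Odd ((n % 2).choose (k % 2)) ∧ Odd ((n / 2).choose (k / 2)) := by
  rw [← Nat.odd_mul, Nat.odd_iff, Nat.odd_iff,
    Choose.choose_modEq_choose_mod_mul_choose_div_nat (p := 2)]

lemma odd_choose_two_mul_add_one_iff (j : ℕ) :
    Odd ((2 * j + 1).choose j) ↔ ∃ t, j + 1 = 2 ^ t := by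
  induction j using Nat.strong_induction_on with
  | _ j ih =>
    rw [odd_choose_iff, show (2 * j + 1) % 2 = 1 by omega, show (2 * j + 1) / 2 = j by omega]
    obtain ⟨i, rfl | rfl⟩ := Nat.even_or_odd' j
    · rw [show 2 * i / 2 = i by omega, ← Nat.centralBinom_eq_two_mul_choose]
      constructor
      · rintro ⟨-, hodd⟩
        refine ⟨0, ?_⟩
        by_contra hi
        exact Nat.not_even_iff_odd.mpr hodd
          (even_iff_two_dvd.mpr (Nat.two_dvd_centralBinom_of_one_le (by omega)))
      · rintro ⟨t, ht⟩
        rcases t with _ | t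
        · obtain rfl : i = 0 := by simpa using ht
          decide
        · rw [pow_succ] at ht
          omega
    · rw [show (2 * i + 1) / 2 = i by omega, show (2 * i + 1) % 2 = 1 by omega,
        Nat.choose_self, ih i (by omega)]
      simp only [odd_one, true_and]
      constructor
      · rintro ⟨t, ht⟩
        exact ⟨t + 1, by rw [pow_succ]; omega⟩
      · rintro ⟨t, ht⟩
        rcases t with _ | t
        · simp at ht
        · exact ⟨t, by rw [pow_succ] at ht; omega⟩

lemma odd_choose_add_two_pow_sub_one_iff {n : ℕ} (hn : n ≠ 0) (t : ℕ) :
    Odd ((n + (2 ^ t - 1)).choose (2 ^ (t + 1) - 1)) ↔ padicValNat 2 n = t := by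
  induction t generalizing n with
  | zero => simp [padicValNat.eq_zero_iff, hn, Nat.odd_iff]
  | succ t ih =>
    have hpow : 2 ^ (t + 1) = 2 * 2 ^ t := by ring
    have hpos : 0 < 2 ^ t := by positivity
    rw [odd_choose_iff, show (2 ^ (t + 1 + 1) - 1) % 2 = 1 by rw [pow_succ]; omega,
      show (2 ^ (t + 1 + 1) - 1) / 2 = 2 ^ (t + 1) - 1 by rw [pow_succ]; omega]
    obtain ⟨a, rfl | rfl⟩ := Nat.even_or_odd' n
    · have ha : a ≠ 0 := by omega
      rw [show (2 * a + (2 ^ (t + 1) - 1)) % 2 = 1 by omega,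
        show (2 * a + (2 ^ (t + 1) - 1)) / 2 = a + (2 ^ t - 1) by omega, ih ha,
        padicValNat.mul two_ne_zero ha, padicValNat_self]
      simp [add_comm 1]
    · rw [show (2 * a + 1 + (2 ^ (t + 1) - 1)) % 2 = 0 by omega,
        padicValNat.eq_zero_of_not_dvd (by omega)]
      simp

lemma choose_mul_choose_succ_eq (n j : ℕ) :
    (n + j).choose j * n.choose (j + 1) = (n + j).choose (2 * j + 1) * (2 * j + 1).choose j := by
  rw [Nat.choose_mul (by omega), Nat.add_sub_cancel, show 2 * j + 1 - j = j + 1 by omega]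

lemma odd_sum_choose_mul_choose {n : ℕ} (hn : 0 < n) :
    Odd (∑ j ∈ range n, (n + j).choose j * n.choose (j + 1)) := by
  have hv : 2 ^ padicValNat 2 n ≤ n := Nat.le_of_dvd hn pow_padicValNat_dvd
  have hodd : ∀ j,
      Odd ((n + j).choose j * n.choose (j + 1)) ↔ j = 2 ^ padicValNat 2 n - 1 := by
    intro j
    have hpow : ∀ t, 2 * (2 ^ t - 1) + 1 = 2 ^ (t + 1) - 1 := fun t => by
      have := Nat.one_le_two_pow (n := t)
      rw [pow_succ]; omega
    rw [choose_mul_choose_succ_eq, Nat.odd_mul, odd_choose_two_mul_add_one_iff]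
    constructor
    · rintro ⟨hodd, t, ht⟩
      obtain rfl : j = 2 ^ t - 1 := by omega
      rw [hpow, odd_choose_add_two_pow_sub_one_iff hn.ne'] at hodd
      rw [hodd]
    · rintro rfl
      rw [hpow, odd_choose_add_two_pow_sub_one_iff hn.ne']
      exact ⟨rfl, padicValNat 2 n, by have := Nat.one_le_two_pow (n := padicValNat 2 n); omega⟩
  rw [odd_sum_iff_odd_card_odd, filter_congr fun j _ => hodd j, filter_eq',
    if_pos (mem_range.mpr (by omega))]
  simp

theorem stmt13 (n : ℕ) (hn : 0 < n) (r : ℕ) :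
    (∑ k ∈ Finset.range n, (2 * k + 1) ^ (2 * r + 1) * delannoy k) ≡ n [MOD 2 * n] := by
  rw [sum_odd_pow_mul_delannoy, sum_range_succ', Nat.choose_zero_right, pow_zero, one_mul,
    one_mul, delannoyMoment_zero]
  obtain ⟨c, hc⟩ := odd_sum_choose_mul_choose hn
  have htail :
      2 * n ∣ ∑ m ∈ range r, r.choose (m + 1) * 4 ^ (m + 1) * delannoyMoment (m + 1) n :=
    dvd_sum fun m _ => by
      rw [mul_assoc]
      exact (Nat.mul_dvd_mul (dvd_pow (by norm_num) m.succ_ne_zero)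
        (dvd_delannoyMoment (m + 1) n)).mul_left _
  obtain ⟨d, hd⟩ := htail
  rw [hd, hc, Nat.ModEq, show 2 * n * d + n * (2 * c + 1) = n + 2 * n * (d + c) by ring,
    Nat.add_mul_mod_self_left]
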